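/- Let I be a finite set, m ∈ ℕ, and reals ε, ϵ, δ with 0 < ε < 1/2, 0 < ϵ ≤ ε, and 0 < δ ≤ ε^m/2. Suppose C ⊆ 2^I satisfies: for every f ∈ F^I with |dom f| ≤ m, | |(C)^f|·2^{−|I|} − (1 − ε)^{m⁰_f}·ε^{m¹_f} | < δ. Let u be the least integer with u ≥ log₂(8/ϵ²) and set s̃(k) = s̄^{(2u)}(k), where s̄^{(0)}(k) = k and s̄^{(j+1)}(k) = s̄(s̄^{(j)}(k)). Let k⁰, k₀ ∈ ℕ with k⁰ + k₀ ≤ m, let f ∈ F^I with |dom f| ≤ k⁰, and let m' be a distribution on 2^I such that ŵ(m'_{(C)^f}) ≥ 2ϵ·|(C)^f|·max_{x ∈ (C)^f} m'_{(C)^f}(x). Then there exists f* ∈ F^I extending f with |dom f* \ dom f| ≤ k₀ − s̃(k₀) such that for every g ∈ F^I extending f* with |dom g \ dom f*| ≤ s̃(k₀): ŵ(m'_{(C)^{f*}})·(1 − 2ϵ) ≤ ŵ(m'_{(C)^g}) ≤ ŵ(m'_{(C)^{f*}})·(1 + 2ϵ), and moreover ŵ(m'_{(C)^g}) ≥ ŵ(m'_{(C)^f})·(1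 − 2ϵ). -/
import Mathlib


open Set Pointwise

/-- `(C)^f` for a partial two-valued function `f ∈ F^I`, represented by its domain `D`
together with a value function `v` (where `v s = true` codes `f s = 1`):
the intersection over `s ∈ D` of `C + s` when `f s = 0` and of `(C + s)ᶜ` when
`f s = 1`.  For `D = ∅` this is all of `2^I`. -/
def csec {ι : Type} (C D : Set (ι → ZMod 2)) (v : (ι → ZMod 2) → Bool) :
    Set (ι → ZMod 2) :=
  ⋂ s ∈ D, if v s = true then (C + {s})ᶜ else C + {s}

/-- `m⁰_f`, the number of points of the domain where `f` takes the value `0`. -/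
noncomputable def m0 {ι : Type} (D : Set (ι → ZMod 2)) (v : (ι → ZMod 2) → Bool) : ℕ :=
  (D ∩ {s | v s = false}).ncard

/-- `m¹_f`, the number of points of the domain where `f` takes the value `1`. -/
noncomputable def m1 {ι : Type} (D : Set (ι → ZMod 2)) (v : (ι → ZMod 2) → Bool) : ℕ :=
  (D ∩ {s | v s = true}).ncard

/-- `ŵ(m'_Y) = Σ_{x ∈ Y} (2^{|I|}/|Y|)·m'(x)`, the normalized mass that the
distribution `m'` gives to `Y`. -/
noncomputable def wHat {ι : Type} [Fintype ι] (m' : (ι → ZMod 2) → ℝ)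
    (Y : Set (ι → ZMod 2)) : ℝ :=
  ((2 : ℝ) ^ Fintype.card ι / (Y.ncard : ℝ)) * ∑ᶠ x ∈ Y, m' x

/-- The function `s̄` of the paper: `s̄(k)` is the largest `l` with
`(k/(l+1))·ϵ²·ε^l > 4` when `k·ϵ² > 4`, and `0` otherwise. -/
noncomputable def sbar (ε ϵ : ℝ) (k : ℕ) : ℕ :=
  if 4 < (k : ℝ) * ϵ ^ 2 then
    sSup {l : ℕ | 4 < (k : ℝ) / ((l : ℝ) + 1) * ϵ ^ 2 * ε ^ l}
  else 0

section Aux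

variable {ι : Type} [Fintype ι]

private lemma mass_eq_sum (m' : (ι → ZMod 2) → ℝ) (Y : Set (ι → ZMod 2)) :
    ∑ᶠ x ∈ Y, m' x = ∑ x ∈ (Y.toFinite).toFinset, m' x := by
  rw [← finsum_mem_coe_finset, Set.Finite.coe_toFinset]

private lemma mass_nonneg (m' : (ι → ZMod 2) → ℝ) (hm : ∀ x, 0 ≤ m' x)
    (Y : Set (ι → ZMod 2)) : 0 ≤ ∑ᶠ x ∈ Y, m' x := by
  rw [mass_eq_sum]; exact Finset.sum_nonneg fun i _ => hm i

private lemma wHat_nonneg' (m' : (ι → ZMod 2) → ℝ) (hm : ∀ x, 0 ≤ m' x)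
    (Y : Set (ι → ZMod 2)) : 0 ≤ wHat m' Y :=
  mul_nonneg (div_nonneg (by positivity) (Nat.cast_nonneg _)) (mass_nonneg m' hm Y)

private lemma wHat_mul_card (m' : (ι → ZMod 2) → ℝ) (Y : Set (ι → ZMod 2))
    (h : (Y.ncard : ℝ) ≠ 0) :
    wHat m' Y * (Y.ncard : ℝ) = 2 ^ Fintype.card ι * ∑ᶠ x ∈ Y, m' x := by
  rw [wHat]; field_simp

private lemma csec_congr {C D : Set (ι → ZMod 2)} {v v' : (ι → ZMod 2) → Bool}
    (h : ∀ s ∈ D, v s = v' s) : csec C D v = csec C D v' := by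
  unfold csec; exact Set.iInter₂_congr fun s hs => by rw [h s hs]

private lemma csec_mono {C : Set (ι → ZMod 2)} {D D' : Set (ι → ZMod 2)} (h : D ⊆ D')
    (v : (ι → ZMod 2) → Bool) : csec C D' v ⊆ csec C D v := by
  intro x hx
  exact Set.mem_iInter₂.2 fun s hs => Set.mem_iInter₂.1 hx s (h hs)

private lemma csec_insert (C D : Set (ι → ZMod 2)) (v : (ι → ZMod 2) → Bool)
    (s : ι → ZMod 2) :
    csec C (insert s D) v = (if v s = true then (C + {s})ᶜ else C + {s}) ∩ csec C D v := by
  unfold csec; rw [Set.biInter_insert]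

private lemma csec_split (C D : Set (ι → ZMod 2)) (v : (ι → ZMod 2) → Bool)
    {s : ι → ZMod 2} (hs : s ∉ D) :
    csec C (insert s D) v ∪ csec C (insert s D) (Function.update v s (!v s)) = csec C D v ∧
    Disjoint (csec C (insert s D) v) (csec C (insert s D) (Function.update v s (!v s))) := by
  have hagr : ∀ x ∈ D, Function.update v s (!v s) x = v x := fun x hx =>
    Function.update_of_ne (by rintro rfl; exact hs hx) _ _
  have h2 : csec C D (Function.update v s (!v s)) = csec C D v := csec_congr hagr
  rw [csec_insert, csec_insert, h2, Function.update_self]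
  cases hvs : v s with
  | false =>
    simp only [Bool.not_false, if_true, if_neg (by simp : ¬(false = true))]
    constructor
    · rw [← Set.union_inter_distrib_right, Set.union_compl_self, Set.univ_inter]
    · exact disjoint_compl_right.mono inter_subset_left inter_subset_left
  | true =>
    simp only [Bool.not_true, if_true, if_neg (by simp : ¬(false = true))]
    constructor
    · rw [← Set.union_inter_distrib_right, Set.compl_union_self, Set.univ_inter]
    · exact disjoint_compl_left.mono inter_subset_left inter_subset_left

private lemma card_eq_m0_add_m1 (D : Set (ι → ZMod 2)) (v : (ι → ZMod 2) → Bool) :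
    D.ncard = m0 D v + m1 D v := by
  have hu : (D ∩ {s | v s = false}) ∪ (D ∩ {s | v s = true}) = D := by
    ext x; cases hv : v x <;> simp [hv]
  have hd : Disjoint (D ∩ {s | v s = false}) (D ∩ {s | v s = true}) := by
    rw [Set.disjoint_left]; rintro a ⟨-, ha⟩ ⟨-, ha'⟩
    simp only [Set.mem_setOf_eq] at ha ha'; rw [ha] at ha'; exact Bool.false_ne_true ha'
  rw [m0, m1, ← Set.ncard_union_eq hd, hu]

private lemma m0_union (D E : Set (ι → ZMod 2)) (v : (ι → ZMod 2) → Bool)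
    (h : Disjoint D E) : m0 (D ∪ E) v = m0 D v + m0 E v := by
  rw [m0, m0, m0, Set.union_inter_distrib_right,
    Set.ncard_union_eq (h.mono inter_subset_left inter_subset_left)]

private lemma m1_union (D E : Set (ι → ZMod 2)) (v : (ι → ZMod 2) → Bool)
    (h : Disjoint D E) : m1 (D ∪ E) v = m1 D v + m1 E v := by
  rw [m1, m1, m1, Set.union_inter_distrib_right,
    Set.ncard_union_eq (h.mono inter_subset_left inter_subset_left)]

end Aux

section Sbar

private lemma sbar_set_le {ε ϵ : ℝ} (hε0 : 0 ≤ ε) (hε1 : ε ≤ 1) (hϵ0 : 0 ≤ ϵ) (hϵ1 : ϵ ≤ 1)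
    {k l : ℕ} (hl : 4 < (k : ℝ) / ((l : ℝ) + 1) * ϵ ^ 2 * ε ^ l) : l ≤ k := by
  have hl1 : (0:ℝ) < (l : ℝ) + 1 := by positivity
  have h1 : (k : ℝ) / ((l : ℝ) + 1) * ϵ ^ 2 * ε ^ l ≤ (k : ℝ) / ((l : ℝ) + 1) := by
    have he : ϵ ^ 2 * ε ^ l ≤ 1 := by
      have := pow_le_one₀ hϵ0 hϵ1 (n := 2)
      have := pow_le_one₀ hε0 hε1 (n := l)
      nlinarith [pow_nonneg hϵ0 2, pow_nonneg hε0 l]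
    have hd : (0:ℝ) ≤ (k : ℝ) / ((l : ℝ) + 1) := by positivity
    calc (k : ℝ) / ((l : ℝ) + 1) * ϵ ^ 2 * ε ^ l
        = (k : ℝ) / ((l : ℝ) + 1) * (ϵ ^ 2 * ε ^ l) := by ring
      _ ≤ (k : ℝ) / ((l : ℝ) + 1) * 1 := mul_le_mul_of_nonneg_left he hd
      _ = (k : ℝ) / ((l : ℝ) + 1) := mul_one _
  have h2 : 4 < (k : ℝ) / ((l : ℝ) + 1) := lt_of_lt_of_le hl h1
  rw [lt_div_iff₀ hl1] at h2
  have : (l : ℝ) < (k : ℝ) := by nlinarith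
  exact_mod_cast this.le

private lemma sbar_le {ε ϵ : ℝ} (hε0 : 0 ≤ ε) (hε1 : ε ≤ 1) (hϵ0 : 0 ≤ ϵ) (hϵ1 : ϵ ≤ 1)
    (k : ℕ) : sbar ε ϵ k ≤ k := by
  rw [sbar]; split_ifs with h
  · refine csSup_le ⟨0, by simpa using h⟩ fun l hl => sbar_set_le hε0 hε1 hϵ0 hϵ1 hl
  · exact Nat.zero_le k

private lemma sbar_iter_le {ε ϵ : ℝ} (hε0 : 0 ≤ ε) (hε1 : ε ≤ 1) (hϵ0 : 0 ≤ ϵ) (hϵ1 : ϵ ≤ 1)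
    (j k : ℕ) : (sbar ε ϵ)^[j] k ≤ k := by
  induction j with
  | zero => simp
  | succ n ih =>
    rw [Function.iterate_succ_apply']
    exact (sbar_le hε0 hε1 hϵ0 hϵ1 _).trans ih

end Sbar

section WSsec

variable {ι : Type} [Fintype ι]

private def WS (C Df : Set (ι → ZMod 2)) (vf : (ι → ZMod 2) → Bool)
    (m' : (ι → ZMod 2) → ℝ) (j : ℕ) : Set ℝ :=
  {w | ∃ D v, Df ⊆ D ∧ (∀ s ∈ Df, v s = vf s) ∧ (D \ Df).ncard ≤ j ∧
    wHat m' (csec C D v) = w}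

private noncomputable def Fsup (C Df : Set (ι → ZMod 2)) (vf : (ι → ZMod 2) → Bool)
    (m' : (ι → ZMod 2) → ℝ) (j : ℕ) : ℝ :=
  sSup (WS C Df vf m' j)

private lemma WS_finite (C Df : Set (ι → ZMod 2)) (vf : (ι → ZMod 2) → Bool)
    (m' : (ι → ZMod 2) → ℝ) (j : ℕ) : (WS C Df vf m' j).Finite := by
  apply Set.Finite.subset (Set.finite_range (wHat m' (ι := ι)))
  rintro w ⟨D, v, -, -, -, rfl⟩
  exact ⟨csec C D v, rfl⟩

private lemma WS_nonempty (C Df : Set (ι → ZMod 2)) (vf : (ι → ZMod 2) → Bool)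
    (m' : (ι → ZMod 2) → ℝ) (j : ℕ) : (WS C Df vf m' j).Nonempty :=
  ⟨wHat m' (csec C Df vf), Df, vf, subset_rfl, fun _ _ => rfl, by simp, rfl⟩

private lemma le_Fsup (C Df : Set (ι → ZMod 2)) (vf : (ι → ZMod 2) → Bool)
    (m' : (ι → ZMod 2) → ℝ) (j : ℕ) {w : ℝ} (hw : w ∈ WS C Df vf m' j) :
    w ≤ Fsup C Df vf m' j :=
  le_csSup (WS_finite C Df vf m' j).bddAbove hw

private lemma Fsup_mem (C Df : Set (ι → ZMod 2)) (vf : (ι → ZMod 2) → Bool)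
    (m' : (ι → ZMod 2) → ℝ) (j : ℕ) : Fsup C Df vf m' j ∈ WS C Df vf m' j :=
  (WS_nonempty C Df vf m' j).csSup_mem (WS_finite C Df vf m' j)

private lemma Fsup_mono (C Df : Set (ι → ZMod 2)) (vf : (ι → ZMod 2) → Bool)
    (m' : (ι → ZMod 2) → ℝ) {j j' : ℕ} (h : j ≤ j') :
    Fsup C Df vf m' j ≤ Fsup C Df vf m' j' := by
  apply csSup_le_csSup (WS_finite C Df vf m' j').bddAbove (WS_nonempty C Df vf m' j)
  rintro w ⟨D, v, h1, h2, h3, h4⟩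
  exact ⟨D, v, h1, h2, h3.trans h, h4⟩

end WSsec

section L6

variable {ι : Type} [Fintype ι]

private lemma massBound (C Df : Set (ι → ZMod 2)) (vf : (ι → ZMod 2) → Bool)
    (m' : (ι → ZMod 2) → ℝ) (J : ℕ) (D : Set (ι → ZMod 2)) (v : (ι → ZMod 2) → Bool)
    (hsub : Df ⊆ D) (hagr : ∀ s ∈ Df, v s = vf s) (hlev : (D \ Df).ncard ≤ J) :
    2 ^ Fintype.card ι * ∑ᶠ x ∈ csec C D v, m' x ≤
      Fsup C Df vf m' J * ((csec C D v).ncard : ℝ) := by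
  have hmem : wHat m' (csec C D v) ∈ WS C Df vf m' J := ⟨D, v, hsub, hagr, hlev, rfl⟩
  rcases eq_or_ne ((csec C D v).ncard) 0 with h0 | h0
  · have hE : csec C D v = ∅ := (Set.ncard_eq_zero (Set.toFinite _)).mp h0
    rw [hE]; simp
  · have hcne : ((csec C D v).ncard : ℝ) ≠ 0 := Nat.cast_ne_zero.mpr h0
    have heq := wHat_mul_card m' (csec C D v) hcne
    rw [← heq]
    exact mul_le_mul_of_nonneg_right (le_Fsup C Df vf m' J hmem) (Nat.cast_nonneg _)

private lemma L6 (C Df : Set (ι → ZMod 2)) (vf : (ι → ZMod 2) → Bool)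
    (m' : (ι → ZMod 2) → ℝ) (J : ℕ) (T : Finset (ι → ZMod 2)) :
    ∀ (D : Set (ι → ZMod 2)) (vg : (ι → ZMod 2) → Bool),
      Df ⊆ D → (∀ s ∈ Df, vg s = vf s) → ((D ∪ ↑T) \ Df).ncard ≤ J →
      2 ^ Fintype.card ι * ∑ᶠ x ∈ csec C D vg, m' x ≤
        2 ^ Fintype.card ι * ∑ᶠ x ∈ csec C (D ∪ ↑T) vg, m' x
          + Fsup C Df vf m' J *
            (((csec C D vg).ncard : ℝ) - ((csec C (D ∪ ↑T) vg).ncard : ℝ)) := by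
  induction T using Finset.induction_on with
  | empty =>
    intro D vg _ _ _
    rw [Finset.coe_empty, Set.union_empty, sub_self, mul_zero, add_zero]
  | @insert a T' haT' ih =>
    intro D vg hsub hagr hlev
    by_cases haD : a ∈ D
    · have hset : D ∪ ↑(insert a T') = D ∪ ↑T' := by
        rw [Finset.coe_insert, Set.union_insert, Set.insert_eq_self.mpr (Set.mem_union_left _ haD)]
      rw [hset] at hlev ⊢
      exact ih D vg hsub hagr hlev
    · have hsplit := csec_split C D vg (s := a) haD
      set uu := Function.update vg a (!vg a) with huu
      have hmass : ∑ᶠ x ∈ csec C D vg, m' x =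
          (∑ᶠ x ∈ csec C (insert a D) vg, m' x) + ∑ᶠ x ∈ csec C (insert a D) uu, m' x := by
        rw [← hsplit.1, finsum_mem_union hsplit.2 (Set.toFinite _) (Set.toFinite _)]
      have hcardeq : ((csec C D vg).ncard : ℝ) =
          ((csec C (insert a D) vg).ncard : ℝ) + ((csec C (insert a D) uu).ncard : ℝ) := by
        rw [← hsplit.1, Set.ncard_union_eq hsplit.2]; push_cast; ring
      have hsubins : insert a D ⊆ D ∪ ↑(insert a T') := by
        rw [Finset.coe_insert]
        intro x hx
        rcases Set.mem_insert_iff.mp hx with rfl | hx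
        · exact Set.mem_union_right _ (Set.mem_insert _ _)
        · exact Set.mem_union_left _ hx
      have hlevins : ((insert a D) \ Df).ncard ≤ J :=
        le_trans (Set.ncard_le_ncard (Set.diff_subset_diff_left hsubins) (Set.toFinite _)) hlev
      have hagru : ∀ s ∈ Df, uu s = vf s := by
        intro s hs
        rw [huu, Function.update_of_ne (by rintro rfl; exact haD (hsub hs)) _ _]
        exact hagr s hs
      have hub := massBound C Df vf m' J (insert a D) uu
        (hsub.trans (Set.subset_insert _ _)) hagru hlevins
      have hset2 : insert a D ∪ ↑T' = D ∪ ↑(insert a T') := by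
        rw [Finset.coe_insert, Set.insert_union, Set.union_insert]
      have ihh := ih (insert a D) vg (hsub.trans (Set.subset_insert _ _)) hagr
        (by rw [hset2]; exact hlev)
      rw [hset2] at ihh
      have hring : Fsup C Df vf m' J *
            ((((csec C (insert a D) vg).ncard : ℝ) + ((csec C (insert a D) uu).ncard : ℝ))
              - ((csec C (D ∪ ↑(insert a T')) vg).ncard : ℝ)) =
          Fsup C Df vf m' J *
            (((csec C (insert a D) vg).ncard : ℝ) - ((csec C (D ∪ ↑(insert a T')) vg).ncard : ℝ))
          + Fsup C Df vf m' J * ((csec C (insert a D) uu).ncard : ℝ) := by ring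
      rw [hmass, hcardeq, mul_add, hring]
      linarith [ihh, hub]

end L6


set_option maxHeartbeats 8000000 in
/-- Theorem 5.4 ("comb") of the paper.  Here `u` is the least natural number with
`u ≥ log₂(8/ϵ²)` and `s̃ = s̄^{(2u)}`. -/
theorem exists_extension_wHat_stable
    (ι : Type) [Fintype ι] (m : ℕ) (ε ϵ δ : ℝ)
    (hε0 : 0 < ε) (hε2 : ε < 1 / 2) (hϵ0 : 0 < ϵ) (hϵε : ϵ ≤ ε)
    (hδ0 : 0 < δ) (hδ : δ ≤ ε ^ m / 2)
    (C : Set (ι → ZMod 2))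
    (hC : ∀ (D : Set (ι → ZMod 2)) (v : (ι → ZMod 2) → Bool), D.ncard ≤ m →
      |((csec C D v).ncard : ℝ) / 2 ^ Fintype.card ι
        - (1 - ε) ^ m0 D v * ε ^ m1 D v| < δ)
    (u : ℕ) (hu1 : Real.logb 2 (8 / ϵ ^ 2) ≤ (u : ℝ))
    (hu2 : ∀ u' : ℕ, Real.logb 2 (8 / ϵ ^ 2) ≤ (u' : ℝ) → u ≤ u')
    (kup k0 : ℕ) (hk : kup + k0 ≤ m)
    (Df : Set (ι → ZMod 2)) (vf : (ι → ZMod 2) → Bool) (hDf : Df.ncard ≤ kup)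
    (m' : (ι → ZMod 2) → ℝ)
    (hm' : ∀ x, 0 ≤ m' x ∧ m' x ≤ 1 / 2 ^ Fintype.card ι)
    (hbig : 2 * ϵ * ((csec C Df vf).ncard : ℝ) *
        sSup ((fun x => ((2 : ℝ) ^ Fintype.card ι / ((csec C Df vf).ncard : ℝ)) * m' x)
          '' csec C Df vf)
      ≤ wHat m' (csec C Df vf)) :
    ∃ (Ds : Set (ι → ZMod 2)) (vs : (ι → ZMod 2) → Bool),
      Df ⊆ Ds ∧ (∀ s ∈ Df, vs s = vf s) ∧
      (Ds \ Df).ncard ≤ k0 - (sbar ε ϵ)^[2 * u] k0 ∧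
      ∀ (Dg : Set (ι → ZMod 2)) (vg : (ι → ZMod 2) → Bool),
        Ds ⊆ Dg → (∀ s ∈ Ds, vg s = vs s) → (Dg \ Ds).ncard ≤ (sbar ε ϵ)^[2 * u] k0 →
        wHat m' (csec C Ds vs) * (1 - 2 * ϵ) ≤ wHat m' (csec C Dg vg) ∧
        wHat m' (csec C Dg vg) ≤ wHat m' (csec C Ds vs) * (1 + 2 * ϵ) ∧
        wHat m' (csec C Df vf) * (1 - 2 * ϵ) ≤ wHat m' (csec C Dg vg) := by
  classical
  have hm0 : ∀ x, 0 ≤ m' x := fun x => (hm' x).1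
  set t := (sbar ε ϵ)^[2 * u] k0 with htdef
  have hε1 : ε ≤ 1 := by linarith
  have hϵ1 : ϵ ≤ 1 := by linarith
  have h2ϵ : 2 * ϵ < 1 := by linarith
  -- trivial branch : t = 0
  by_cases ht0 : t = 0
  · refine ⟨Df, vf, subset_rfl, fun s _ => rfl, by simp, ?_⟩
    intro Dg vg hsub hagr hcard
    have hDg : Dg = Df := by
      have h1 : (Dg \ Df).ncard = 0 := by omega
      have h2 : Dg \ Df = ∅ := (Set.ncard_eq_zero (Set.toFinite _)).mp h1
      exact subset_antisymm (by rw [← Set.diff_union_of_subset hsub, h2, Set.empty_union])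
        hsub
    have hYeq : csec C Dg vg = csec C Df vf := by
      rw [hDg]; exact csec_congr fun s hs => hagr s hs
    rw [hYeq]
    have hw := wHat_nonneg' m' hm0 (csec C Df vf)
    refine ⟨by nlinarith, by nlinarith, by nlinarith⟩
  -- trivial branch : total mass zero
  by_cases hM0 : ∑ᶠ x ∈ csec C Df vf, m' x = 0
  · refine ⟨Df, vf, subset_rfl, fun s _ => rfl, by simp, ?_⟩
    intro Dg vg hsub hagr hcard
    have hzero : ∀ x ∈ csec C Df vf, m' x = 0 := by
      rw [mass_eq_sum] at hM0
      intro x hx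
      exact (Finset.sum_eq_zero_iff_of_nonneg fun i _ => hm0 i).mp hM0 x
        ((Set.Finite.mem_toFinset _).mpr hx)
    have hsubY : csec C Dg vg ⊆ csec C Df vf := by
      have h1 : csec C Dg vg ⊆ csec C Df vg := csec_mono hsub vg
      rwa [csec_congr (fun s hs => hagr s hs : ∀ s ∈ Df, vg s = vf s)] at h1
    have hMg : ∑ᶠ x ∈ csec C Dg vg, m' x = 0 := by
      rw [mass_eq_sum]
      exact Finset.sum_eq_zero fun x hx =>
        hzero x (hsubY ((Set.Finite.mem_toFinset _).mp hx))
    have e1 : wHat m' (csec C Dg vg) = 0 := by rw [wHat, hMg, mul_zero]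
    have e2 : wHat m' (csec C Df vf) = 0 := by rw [wHat, hM0, mul_zero]
    rw [e1, e2]
    norm_num
  -- main branch
  have ht1 : 1 ≤ t := Nat.one_le_iff_ne_zero.mpr ht0
  have hu1' : 1 ≤ u := by
    by_contra hu
    have hu0 : u = 0 := by omega
    rw [hu0] at hu1
    have hgt : (0:ℝ) < Real.logb 2 (8 / ϵ ^ 2) := by
      apply Real.logb_pos (by norm_num)
      rw [lt_div_iff₀ (by positivity)]
      nlinarith
    simp at hu1
    linarith
  set l1 := sbar ε ϵ k0 with hl1def
  have htl1 : t ≤ l1 := by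
    have h2u : 2 * u = (2 * u - 1) + 1 := by omega
    rw [htdef, h2u, Function.iterate_succ_apply]
    exact sbar_iter_le hε0.le hε1 hϵ0.le hϵ1 _ _
  have hl11 : 1 ≤ l1 := le_trans ht1 htl1
  have hcond : 4 < (k0 : ℝ) * ϵ ^ 2 := by
    by_contra hc
    push_neg at hc
    have : l1 = 0 := by rw [hl1def, sbar, if_neg (not_lt.mpr hc)]
    omega
  have hl1mem : 4 < (k0 : ℝ) / ((l1 : ℝ) + 1) * ϵ ^ 2 * ε ^ l1 := by
    have hmm : l1 ∈ {l : ℕ | 4 < (k0 : ℝ) / ((l : ℝ) + 1) * ϵ ^ 2 * ε ^ l} := by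
      rw [hl1def, sbar, if_pos hcond]
      refine Nat.sSup_mem ⟨0, ?_⟩ ⟨k0, fun l hl => sbar_set_le hε0.le hε1 hϵ0.le hϵ1 hl⟩
      simpa using hcond
    exact hmm
  have hl1k0 : l1 ≤ k0 := sbar_set_le hε0.le hε1 hϵ0.le hϵ1 hl1mem
  have htk0 : t ≤ k0 := le_trans htl1 hl1k0
  have htR : (0:ℝ) < (t : ℝ) := by exact_mod_cast ht1
  have hl1R : (1:ℝ) ≤ (l1 : ℝ) := by exact_mod_cast hl11
  -- numeric: 2 < k0/(2t) * eps^2 * ep^t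
  have hnum : 2 < (k0 : ℝ) / (2 * (t : ℝ)) * ϵ ^ 2 * ε ^ t := by
    have e1 : ε ^ l1 ≤ ε ^ t := pow_le_pow_of_le_one hε0.le hε1 htl1
    have hk0R : (0:ℝ) ≤ (k0 : ℝ) := Nat.cast_nonneg _
    have d1 : (k0 : ℝ) / (2 * ((l1 : ℝ) + 1)) ≤ (k0 : ℝ) / (2 * (l1 : ℝ)) :=
      div_le_div_of_nonneg_left hk0R (by linarith) (by linarith)
    have d2 : (k0 : ℝ) / (2 * (l1 : ℝ)) ≤ (k0 : ℝ) / (2 * (t : ℝ)) :=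
      div_le_div_of_nonneg_left hk0R (by linarith)
        (by have htle : (t:ℝ) ≤ (l1:ℝ) := by exact_mod_cast htl1
            linarith)
    have hεl1 : (0:ℝ) ≤ ε ^ l1 := by positivity
    have hϵ2 : (0:ℝ) ≤ ϵ ^ 2 := by positivity
    have step1 : (k0 : ℝ) / (2 * ((l1 : ℝ) + 1)) * ϵ ^ 2 * ε ^ l1 ≤
        (k0 : ℝ) / (2 * (l1 : ℝ)) * ϵ ^ 2 * ε ^ l1 :=
      mul_le_mul_of_nonneg_right (mul_le_mul_of_nonneg_right d1 hϵ2) hεl1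
    have step2 : (k0 : ℝ) / (2 * (l1 : ℝ)) * ϵ ^ 2 * ε ^ l1 ≤
        (k0 : ℝ) / (2 * (t : ℝ)) * ϵ ^ 2 * ε ^ t := by
      have q1 : (k0 : ℝ) / (2 * (l1 : ℝ)) * ϵ ^ 2 * ε ^ l1 ≤
          (k0 : ℝ) / (2 * (t : ℝ)) * ϵ ^ 2 * ε ^ l1 :=
        mul_le_mul_of_nonneg_right (mul_le_mul_of_nonneg_right d2 hϵ2) hεl1
      have q2 : (k0 : ℝ) / (2 * (t : ℝ)) * ϵ ^ 2 * ε ^ l1 ≤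
          (k0 : ℝ) / (2 * (t : ℝ)) * ϵ ^ 2 * ε ^ t := by
        apply mul_le_mul_of_nonneg_left e1
        positivity
      linarith
    have e2 : (k0 : ℝ) / (2 * ((l1 : ℝ) + 1)) * ϵ ^ 2 * ε ^ l1 =
        1 / 2 * ((k0 : ℝ) / ((l1 : ℝ) + 1) * ϵ ^ 2 * ε ^ l1) := by
      have h1 : ((l1:ℝ)+1) ≠ 0 := by positivity
      field_simp
    have e3 : 2 < (k0 : ℝ) / (2 * ((l1 : ℝ) + 1)) * ϵ ^ 2 * ε ^ l1 := by
      rw [e2]; linarith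
    linarith
  -- cardinality estimates
  have hNpos : (0:ℝ) < 2 ^ Fintype.card ι := by positivity
  have hDfm : Df.ncard ≤ m := le_trans hDf (by omega)
  have hkey : ∀ (D : Set (ι → ZMod 2)) (v : (ι → ZMod 2) → Bool), D.ncard ≤ m →
      (0 < (1 - ε) ^ m0 D v * ε ^ m1 D v) ∧
      ((1 - ε) ^ m0 D v * ε ^ m1 D v) / 2 * 2 ^ Fintype.card ι < ((csec C D v).ncard : ℝ) ∧
      ((csec C D v).ncard : ℝ) < 3 / 2 * ((1 - ε) ^ m0 D v * ε ^ m1 D v) * 2 ^ Fintype.card ι := by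
    intro D v hDm
    have hab := hC D v hDm
    rw [abs_lt] at hab
    obtain ⟨hab1, hab2⟩ := hab
    have hp0 : 0 < (1 - ε) ^ m0 D v * ε ^ m1 D v :=
      mul_pos (pow_pos (by linarith) _) (pow_pos hε0 _)
    have hεm : ε ^ m ≤ (1 - ε) ^ m0 D v * ε ^ m1 D v := by
      calc ε ^ m ≤ ε ^ D.ncard := pow_le_pow_of_le_one hε0.le hε1 hDm
        _ = ε ^ m0 D v * ε ^ m1 D v := by rw [card_eq_m0_add_m1 D v, pow_add]
        _ ≤ (1 - ε) ^ m0 D v * ε ^ m1 D v :=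
          mul_le_mul_of_nonneg_right (pow_le_pow_left₀ hε0.le (by linarith) _) (by positivity)
    have hδp : δ ≤ ((1 - ε) ^ m0 D v * ε ^ m1 D v) / 2 := le_trans hδ (by linarith)
    refine ⟨hp0, ?_, ?_⟩
    · rw [← lt_div_iff₀ hNpos]
      linarith
    · rw [← div_lt_iff₀ hNpos]
      linarith
  have hpos : ∀ (D : Set (ι → ZMod 2)) (v : (ι → ZMod 2) → Bool), D.ncard ≤ m →
      0 < ((csec C D v).ncard : ℝ) := by
    intro D v hDm
    obtain ⟨hp0, hlow, -⟩ := hkey D v hDm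
    have h := mul_pos (div_pos hp0 two_pos) hNpos
    linarith
  have hcf : 0 < ((csec C Df vf).ncard : ℝ) := hpos Df vf hDfm
  have hMf : 0 < ∑ᶠ x ∈ csec C Df vf, m' x :=
    lt_of_le_of_ne (mass_nonneg m' hm0 _) (Ne.symm hM0)
  have hwf : 0 < wHat m' (csec C Df vf) := by
    rw [wHat]; exact mul_pos (div_pos hNpos hcf) hMf
  -- pointwise bound from hbig
  have hX : ∀ x ∈ csec C Df vf, 2 * ϵ * 2 ^ Fintype.card ι * m' x
      ≤ wHat m' (csec C Df vf) := by
    intro x hx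
    set img := (fun x => ((2 : ℝ) ^ Fintype.card ι / ((csec C Df vf).ncard : ℝ)) * m' x)
      '' csec C Df vf with himg
    have hb : BddAbove img := ((Set.toFinite _).image _).bddAbove
    have h1 : (2:ℝ) ^ Fintype.card ι / ((csec C Df vf).ncard : ℝ) * m' x ≤ sSup img :=
      le_csSup hb ⟨x, hx, rfl⟩
    have h2 : 2 * ϵ * ((csec C Df vf).ncard : ℝ) *
        ((2:ℝ) ^ Fintype.card ι / ((csec C Df vf).ncard : ℝ) * m' x) ≤
        2 * ϵ * ((csec C Df vf).ncard : ℝ) * sSup img :=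
      mul_le_mul_of_nonneg_left h1 (by positivity)
    have h3 : 2 * ϵ * ((csec C Df vf).ncard : ℝ) *
        ((2:ℝ) ^ Fintype.card ι / ((csec C Df vf).ncard : ℝ) * m' x) =
        2 * ϵ * 2 ^ Fintype.card ι * m' x := by
      field_simp
    linarith [hbig]
  -- cap on Fsup
  have hcap : ∀ j, j ≤ k0 →
      Fsup C Df vf m' j ≤ wHat m' (csec C Df vf) / (2 * ϵ) := by
    intro j hj
    apply csSup_le (WS_nonempty C Df vf m' j)
    rintro w ⟨D, v, hsub, hagr, hlev, rfl⟩
    have hYsub : csec C D v ⊆ csec C Df vf := by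
      have h1 := csec_mono (C := C) hsub v
      rwa [csec_congr (fun s hs => hagr s hs : ∀ s ∈ Df, v s = vf s)] at h1
    have hDm : D.ncard ≤ m := by
      have h2 : D.ncard ≤ Df.ncard + (D \ Df).ncard := by
        calc D.ncard = (Df ∪ (D \ Df)).ncard := by rw [Set.union_diff_cancel hsub]
          _ ≤ Df.ncard + (D \ Df).ncard := Set.ncard_union_le _ _
      omega
    have hY : 0 < ((csec C D v).ncard : ℝ) := hpos D v hDm
    have hconst : ∀ x ∈ ((csec C D v).toFinite).toFinset,
        m' x ≤ wHat m' (csec C Df vf) / (2 * ϵ * 2 ^ Fintype.card ι) := by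
      intro x hx
      have hxY : x ∈ csec C Df vf := hYsub ((Set.Finite.mem_toFinset _).mp hx)
      rw [le_div_iff₀ (by positivity)]
      calc m' x * (2 * ϵ * 2 ^ Fintype.card ι)
          = 2 * ϵ * 2 ^ Fintype.card ι * m' x := by ring
        _ ≤ wHat m' (csec C Df vf) := hX x hxY
    have hmle : ∑ᶠ x ∈ csec C D v, m' x ≤ ((csec C D v).ncard : ℝ) *
        (wHat m' (csec C Df vf) / (2 * ϵ * 2 ^ Fintype.card ι)) := by
      rw [mass_eq_sum]
      calc ∑ x ∈ ((csec C D v).toFinite).toFinset, m' x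
          ≤ ((csec C D v).toFinite).toFinset.card •
            (wHat m' (csec C Df vf) / (2 * ϵ * 2 ^ Fintype.card ι)) :=
            Finset.sum_le_card_nsmul _ _ _ hconst
        _ = ((csec C D v).ncard : ℝ) *
            (wHat m' (csec C Df vf) / (2 * ϵ * 2 ^ Fintype.card ι)) := by
            rw [nsmul_eq_mul, Set.ncard_eq_toFinset_card _ (csec C D v).toFinite]
    have hfinal : wHat m' (csec C D v) ≤ (2:ℝ) ^ Fintype.card ι / ((csec C D v).ncard : ℝ) *
        (((csec C D v).ncard : ℝ) *
          (wHat m' (csec C Df vf) / (2 * ϵ * 2 ^ Fintype.card ι))) := by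
      rw [wHat]
      exact mul_le_mul_of_nonneg_left hmle (by positivity)
    have heq : (2:ℝ) ^ Fintype.card ι / ((csec C D v).ncard : ℝ) *
        (((csec C D v).ncard : ℝ) *
          (wHat m' (csec C Df vf) / (2 * ϵ * 2 ^ Fintype.card ι))) =
        wHat m' (csec C Df vf) / (2 * ϵ) := by
      field_simp
    linarith
  -- Fsup at level 0
  have hF0 : Fsup C Df vf m' 0 = wHat m' (csec C Df vf) := by
    apply le_antisymm
    · apply csSup_le (WS_nonempty C Df vf m' 0)
      rintro w ⟨D, v, hsub, hagr, hlev, rfl⟩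
      have h1 : D \ Df = ∅ := (Set.ncard_eq_zero (Set.toFinite _)).mp (Nat.le_zero.mp hlev)
      have hD : D = Df :=
        subset_antisymm (by rw [← Set.diff_union_of_subset hsub, h1, Set.empty_union]) hsub
      rw [hD, csec_congr (fun s hs => hagr s hs : ∀ s ∈ Df, v s = vf s)]
    · exact le_Fsup C Df vf m' 0 ⟨Df, vf, subset_rfl, fun _ _ => rfl, by simp, rfl⟩
  -- pigeonhole setup
  set r := k0 / t with hrdef
  have hrt_le : r * t ≤ k0 := Nat.div_mul_le_self _ _
  have hk0_lt : k0 < r * t + t := by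
    have h1 := Nat.div_add_mod k0 t
    have h2 := Nat.mod_lt k0 (show 0 < t by omega)
    have h3 : t * (k0 / t) = r * t := by rw [hrdef, Nat.mul_comm]
    omega
  set lam := 2 / 3 * ϵ * ε ^ t with hlamdef
  have hεt : (0:ℝ) < ε ^ t := pow_pos hε0 t
  have hlam0 : 0 < lam := by rw [hlamdef]; positivity
  have hlam2ϵ : lam ≤ 2 * ϵ := by
    rw [hlamdef]
    nlinarith [pow_le_one₀ hε0.le hε1 (n := t), pow_nonneg hε0.le t]
  have hprod1 : ϵ ^ 2 * ε ^ t ≤ 1 := by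
    nlinarith [pow_le_one₀ hϵ0.le hϵ1 (n := 2), pow_le_one₀ hε0.le hε1 (n := t),
      pow_nonneg hϵ0.le 2, pow_nonneg hε0.le t]
  have hQ0 : (0:ℝ) ≤ (k0 : ℝ) / (2 * (t:ℝ)) := by positivity
  have h4t : 2 * (2 * (t:ℝ)) < (k0:ℝ) := by
    have h2Q : 2 < (k0 : ℝ) / (2 * (t:ℝ)) := by
      nlinarith [hnum, mul_nonneg hQ0 (sub_nonneg.mpr hprod1)]
    rw [lt_div_iff₀ (by linarith : (0:ℝ) < 2 * (t:ℝ))] at h2Q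
    linarith
  have hrR : (k0 : ℝ) / (2 * (t:ℝ)) ≤ (r : ℝ) := by
    have h1 : (k0 : ℝ) < (r:ℝ) * (t:ℝ) + (t:ℝ) := by exact_mod_cast hk0_lt
    rw [div_le_iff₀ (by linarith : (0:ℝ) < 2 * (t:ℝ))]
    nlinarith [h4t, h1, htR]
  have hrlam : 1 / (2 * ϵ) < 1 + (r : ℝ) * lam := by
    have h8 : 8/3 < 2 * ϵ * ((k0:ℝ) / (2 * (t:ℝ)) * lam) := by
      rw [hlamdef]
      nlinarith [hnum, hϵ0]
    have hQlam : (k0 : ℝ) / (2 * (t:ℝ)) * lam ≤ (r:ℝ) * lam :=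
      mul_le_mul_of_nonneg_right hrR hlam0.le
    have h9 : 8/3 < 2 * ϵ * ((r:ℝ) * lam) := by
      have := mul_le_mul_of_nonneg_left hQlam (by positivity : (0:ℝ) ≤ 2 * ϵ)
      linarith
    rw [div_lt_iff₀ (by positivity : (0:ℝ) < 2 * ϵ)]
    nlinarith [h9, hϵ0]
  have hpig : ∃ i, i < r ∧ Fsup C Df vf m' ((i+1)*t) ≤ (1 + lam) * Fsup C Df vf m' (i*t) := by
    by_contra hcon
    push_neg at hcon
    have hgrow : ∀ i, i ≤ r → (1 + lam) ^ i * Fsup C Df vf m' 0 ≤ Fsup C Df vf m' (i*t) := by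
      intro i
      induction i with
      | zero => intro _; simp
      | succ n ih =>
        intro hn
        have h2 := ih (by omega)
        calc (1 + lam) ^ (n+1) * Fsup C Df vf m' 0
            = (1 + lam) * ((1 + lam) ^ n * Fsup C Df vf m' 0) := by ring
          _ ≤ (1 + lam) * Fsup C Df vf m' (n*t) :=
            mul_le_mul_of_nonneg_left h2 (by linarith)
          _ ≤ Fsup C Df vf m' ((n+1)*t) := (hcon n (by omega)).le
    have hBern : 1 + (r:ℝ) * lam ≤ (1 + lam) ^ r := one_add_mul_le_pow (by linarith) r
    have hcapr := hcap (r*t) hrt_le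
    have hgr := hgrow r le_rfl
    rw [hF0] at hgr
    have hul : wHat m' (csec C Df vf) / (2*ϵ) <
        (1 + (r:ℝ)*lam) * wHat m' (csec C Df vf) := by
      have e : wHat m' (csec C Df vf) / (2*ϵ) = 1/(2*ϵ) * wHat m' (csec C Df vf) := by ring
      rw [e]
      exact mul_lt_mul_of_pos_right hrlam hwf
    have hfin : (1 + (r:ℝ)*lam) * wHat m' (csec C Df vf) ≤ Fsup C Df vf m' (r*t) :=
      le_trans (mul_le_mul_of_nonneg_right hBern hwf.le) hgr
    linarith
  obtain ⟨i, hir, hFstep⟩ := hpig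
  obtain ⟨Ds, vs, hDsub, hvagr, hDslev, hws⟩ := Fsup_mem C Df vf m' (i*t)
  have hwst : 0 < wHat m' (csec C Ds vs) := by
    have h1 : wHat m' (csec C Df vf) ≤ Fsup C Df vf m' (i*t) := by
      rw [← hF0]; exact Fsup_mono C Df vf m' (Nat.zero_le _)
    rw [hws]; linarith
  have hJk0 : (i+1)*t ≤ k0 :=
    le_trans (Nat.mul_le_mul_right t (by omega : i+1 ≤ r)) hrt_le
  have hFJle : Fsup C Df vf m' ((i+1)*t) ≤ (1 + lam) * wHat m' (csec C Ds vs) := by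
    rw [hws]; exact hFstep
  refine ⟨Ds, vs, hDsub, hvagr, ?_, ?_⟩
  · have h1 : (i+1)*t = i*t + t := by ring
    omega
  · intro Dg vg hgsub hgagr hglev
    have hYs_eq : csec C Ds vg = csec C Ds vs := csec_congr (fun s hs => hgagr s hs)
    have hDgDf : Df ⊆ Dg := hDsub.trans hgsub
    have hgagrf : ∀ s ∈ Df, vg s = vf s := fun s hs => (hgagr s (hDsub hs)).trans (hvagr s hs)
    have hlevg : (Dg \ Df).ncard ≤ (i+1)*t := by
      have hsub2 : Dg \ Df ⊆ (Ds \ Df) ∪ (Dg \ Ds) := by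
        intro x hx
        by_cases hxs : x ∈ Ds
        · exact Set.mem_union_left _ ⟨hxs, hx.2⟩
        · exact Set.mem_union_right _ ⟨hx.1, hxs⟩
      have h3 := Set.ncard_le_ncard hsub2 (Set.toFinite _)
      have h4 := Set.ncard_union_le (Ds \ Df) (Dg \ Ds)
      have h5 : (i+1)*t = i*t + t := by ring
      omega
    have hwgF : wHat m' (csec C Dg vg) ≤ Fsup C Df vf m' ((i+1)*t) :=
      le_Fsup C Df vf m' _ ⟨Dg, vg, hDgDf, hgagrf, hlevg, rfl⟩
    have hDsm : Ds.ncard ≤ m := by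
      have h2 : Ds.ncard ≤ Df.ncard + (Ds \ Df).ncard := by
        calc Ds.ncard = (Df ∪ (Ds \ Df)).ncard := by rw [Set.union_diff_cancel hDsub]
          _ ≤ Df.ncard + (Ds \ Df).ncard := Set.ncard_union_le _ _
      have h6 : i*t ≤ (i+1)*t := Nat.mul_le_mul_right t (by omega)
      omega
    have hDgm : Dg.ncard ≤ m := by
      have h2 : Dg.ncard ≤ Df.ncard + (Dg \ Df).ncard := by
        calc Dg.ncard = (Df ∪ (Dg \ Df)).ncard := by rw [Set.union_diff_cancel hDgDf]
          _ ≤ Df.ncard + (Dg \ Df).ncard := Set.ncard_union_le _ _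
      omega
    have hA : 0 < ((csec C Ds vs).ncard : ℝ) := hpos Ds vs hDsm
    have hB : 0 < ((csec C Dg vg).ncard : ℝ) := hpos Dg vg hDgm
    have hYgsub : csec C Dg vg ⊆ csec C Ds vs := by
      have h1 := csec_mono (C := C) hgsub vg
      rwa [hYs_eq] at h1
    have hBA : ((csec C Dg vg).ncard : ℝ) ≤ ((csec C Ds vs).ncard : ℝ) := by
      exact_mod_cast Set.ncard_le_ncard hYgsub (Set.toFinite _)
    -- ratio
    have hratio : ε ^ t / 3 * ((csec C Ds vs).ncard : ℝ) ≤ ((csec C Dg vg).ncard : ℝ) := by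
      have hdisj : Disjoint Ds (Dg \ Ds) := Set.disjoint_sdiff_right
      have hDgu : Ds ∪ (Dg \ Ds) = Dg := Set.union_diff_cancel hgsub
      have hm0g : m0 Dg vg = m0 Ds vg + m0 (Dg \ Ds) vg := by
        conv_lhs => rw [← hDgu]
        exact m0_union _ _ _ hdisj
      have hm1g : m1 Dg vg = m1 Ds vg + m1 (Dg \ Ds) vg := by
        conv_lhs => rw [← hDgu]
        exact m1_union _ _ _ hdisj
      have habd : m0 (Dg \ Ds) vg + m1 (Dg \ Ds) vg = (Dg \ Ds).ncard :=
        (card_eq_m0_add_m1 _ _).symm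
      have hpS0 : 0 < (1 - ε) ^ m0 Ds vg * ε ^ m1 Ds vg :=
        mul_pos (pow_pos (by linarith) _) (pow_pos hε0 _)
      have hb : ε ^ t ≤ ε ^ m0 (Dg \ Ds) vg * ε ^ m1 (Dg \ Ds) vg := by
        rw [← pow_add, habd]
        exact pow_le_pow_of_le_one hε0.le hε1 hglev
      have ha : ε ^ m0 (Dg \ Ds) vg ≤ (1 - ε) ^ m0 (Dg \ Ds) vg :=
        pow_le_pow_left₀ hε0.le (by linarith) _
      have hpGS : ((1 - ε) ^ m0 Ds vg * ε ^ m1 Ds vg) * ε ^ t ≤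
          (1 - ε) ^ m0 Dg vg * ε ^ m1 Dg vg := by
        rw [hm0g, hm1g, pow_add, pow_add]
        calc ((1 - ε) ^ m0 Ds vg * ε ^ m1 Ds vg) * ε ^ t
            ≤ ((1 - ε) ^ m0 Ds vg * ε ^ m1 Ds vg) *
              (ε ^ m0 (Dg \ Ds) vg * ε ^ m1 (Dg \ Ds) vg) :=
              mul_le_mul_of_nonneg_left hb hpS0.le
          _ ≤ ((1 - ε) ^ m0 Ds vg * ε ^ m1 Ds vg) *
              ((1 - ε) ^ m0 (Dg \ Ds) vg * ε ^ m1 (Dg \ Ds) vg) := by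
              apply mul_le_mul_of_nonneg_left _ hpS0.le
              exact mul_le_mul_of_nonneg_right ha (by positivity)
          _ = (1 - ε) ^ m0 Ds vg * (1 - ε) ^ m0 (Dg \ Ds) vg *
              (ε ^ m1 Ds vg * ε ^ m1 (Dg \ Ds) vg) := by ring
      obtain ⟨-, -, hupS⟩ := hkey Ds vg hDsm
      obtain ⟨-, hlowG, -⟩ := hkey Dg vg hDgm
      rw [hYs_eq] at hupS
      have hstep := mul_lt_mul_of_pos_left hupS (show (0:ℝ) < ε ^ t / 3 by positivity)
      have hstep2 := mul_le_mul_of_nonneg_right hpGS (le_of_lt hNpos)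
      linarith [hstep, hstep2, hlowG]
    have hAne : ((csec C Ds vs).ncard : ℝ) ≠ 0 := ne_of_gt hA
    have hBne : ((csec C Dg vg).ncard : ℝ) ≠ 0 := ne_of_gt hB
    have hMsA := wHat_mul_card m' (csec C Ds vs) hAne
    have hMgB := wHat_mul_card m' (csec C Dg vg) hBne
    have hTcoe : ((((Dg \ Ds).toFinite).toFinset : Finset (ι → ZMod 2)) :
        Set (ι → ZMod 2)) = Dg \ Ds := Set.Finite.coe_toFinset _
    have hL6 := L6 C Df vf m' ((i+1)*t) (((Dg \ Ds).toFinite).toFinset) Ds vg hDsub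
      hgagrf
      (by rw [hTcoe, Set.union_diff_cancel hgsub]; exact hlevg)
    rw [hTcoe, Set.union_diff_cancel hgsub, hYs_eq] at hL6
    have hlower : wHat m' (csec C Ds vs) * (1 - 2*ϵ) ≤ wHat m' (csec C Dg vg) := by
      by_contra hlt
      push_neg at hlt
      have hstepa : Fsup C Df vf m' ((i+1)*t) *
          (((csec C Ds vs).ncard : ℝ) - ((csec C Dg vg).ncard : ℝ)) ≤
          (1 + lam) * wHat m' (csec C Ds vs) *
            (((csec C Ds vs).ncard : ℝ) - ((csec C Dg vg).ncard : ℝ)) :=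
        mul_le_mul_of_nonneg_right hFJle (by linarith)
      have hstepb : wHat m' (csec C Dg vg) * ((csec C Dg vg).ncard : ℝ) <
          wHat m' (csec C Ds vs) * (1 - 2*ϵ) * ((csec C Dg vg).ncard : ℝ) :=
        mul_lt_mul_of_pos_right hlt hB
      have hE6 := mul_le_mul_of_nonneg_left hratio
        (show (0:ℝ) ≤ 2 * ϵ * wHat m' (csec C Ds vs) by positivity)
      rw [hlamdef] at hstepa
      linarith [hL6, hMsA, hMgB, hstepa, hstepb, hE6,
        mul_nonneg (mul_nonneg (mul_nonneg
          (show (0:ℝ) ≤ 2/3*ϵ by linarith) hεt.le) hwst.le) hB.le]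
    refine ⟨hlower, ?_, ?_⟩
    · calc wHat m' (csec C Dg vg) ≤ Fsup C Df vf m' ((i+1)*t) := hwgF
        _ ≤ (1 + lam) * wHat m' (csec C Ds vs) := hFJle
        _ ≤ (1 + 2*ϵ) * wHat m' (csec C Ds vs) :=
          mul_le_mul_of_nonneg_right (by linarith) hwst.le
        _ = wHat m' (csec C Ds vs) * (1 + 2*ϵ) := mul_comm _ _
    · have hwfle : wHat m' (csec C Df vf) ≤ wHat m' (csec C Ds vs) := by
        rw [hws, ← hF0]
        exact Fsup_mono C Df vf m' (Nat.zero_le _)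
      have hmm := mul_le_mul_of_nonneg_right hwfle (show (0:ℝ) ≤ 1 - 2*ϵ by linarith)
      linarith [hmm, hlower]
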